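/- Let k ≥ 1 be a natural number, let ℓ be a natural number with ℓ ≤ k, and let z ∈ ℂ. Then ((k+1)/π) · ∫_ℂ (1 + z·conj(w))^(k−1) · (z·conj(w) − 1) / (1 + |w|²)^(k+2) · w^ℓ dA(w) = ((2ℓ − k)/k) · z^ℓ. -/

import Mathlib

/-!
Write the integrand as `p (z * conj w) * w ^ ℓ / (1 + ‖w‖²) ^ (k + 2)` with
`p = (1 + X) ^ (k - 1) * (X - 1)`. The weight is rotation invariant, so the monomial
`conj w ^ a * w ^ ℓ` integrates to zero unless `a = ℓ`, and only the coefficient of `X ^ ℓ`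
in `p` survives. It multiplies the moment
`∫ ‖w‖ ^ (2ℓ) / (1 + ‖w‖²) ^ (k + 2) = π ℓ! (k - ℓ)! / (k + 1)!`, a Beta integral after
passing to polar coordinates and substituting `t = r²`.
Finally `k * p.coeff ℓ = (2ℓ - k) * k.choose ℓ` by Pascal's rule and absorption.
-/

open MeasureTheory Complex Set Polynomial ComplexConjugate
open scoped Nat

theorem integrableOn_pow_div_one_add_pow {n c : ℕ} (h : n + 2 ≤ c) :
    IntegrableOn (fun t : ℝ => t ^ n / (1 + t) ^ c) (Ioi 0) := by
  refine ((integrable_one_add_norm (E := ℝ) (r := 2) (by norm_num)).restrict).mono'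
    (by fun_prop : Measurable fun t : ℝ => t ^ n / (1 + t) ^ c).aestronglyMeasurable ?_
  filter_upwards [ae_restrict_mem measurableSet_Ioi] with t (ht : 0 < t)
  rw [Real.norm_of_nonneg (by positivity), Real.norm_of_nonneg ht.le,
    Real.rpow_neg (by positivity), Real.rpow_two, div_le_iff₀ (by positivity),
    inv_mul_eq_div, le_div_iff₀ (by positivity)]
  calc t ^ n * (1 + t) ^ 2 ≤ (1 + t) ^ n * (1 + t) ^ 2 := by gcongr; linarith
    _ = (1 + t) ^ (n + 2) := (pow_add _ _ _).symm
    _ ≤ (1 + t) ^ c := pow_le_pow_right₀ (by linarith) h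

theorem integral_Ioi_one_div_one_add_pow (m : ℕ) :
    ∫ t in Ioi (0:ℝ), 1 / (1 + t) ^ (m + 2) = 1 / (m + 1) := by
  have hF : ∀ x ∈ Ioi (0:ℝ),
      HasDerivAt (fun t : ℝ => -(1 / (m + 1 : ℝ)) * ((1 + t) ^ (m + 1))⁻¹)
        (1 / (1 + x) ^ (m + 2)) x := by
    intro x (hx : 0 < x)
    have hpow : HasDerivAt (fun t : ℝ => (1 + t) ^ (m + 1)) ((m + 1 : ℕ) * (1 + x) ^ m * 1) x :=
      ((hasDerivAt_id x).const_add 1).pow (m + 1)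
    refine ((hpow.inv (by positivity)).const_mul (-(1 / (m + 1) : ℝ))).congr_deriv ?_
    field_simp
    push_cast
    ring
  have hlim : Filter.Tendsto (fun t : ℝ => -(1 / (m + 1)) * ((1 + t) ^ (m + 1))⁻¹)
      Filter.atTop (nhds 0) := by
    simpa using (((Filter.tendsto_pow_atTop (Nat.succ_ne_zero m)).comp
      (Filter.tendsto_atTop_add_const_left _ 1 Filter.tendsto_id)).inv_tendsto_atTop).const_mul
      (-(1 / (m + 1) : ℝ))
  rw [integral_Ioi_of_hasDerivAt_of_tendsto
    (ContinuousAt.continuousWithinAt (by fun_prop (disch := norm_num))) hF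
    (by simpa using integrableOn_pow_div_one_add_pow (n := 0) (c := m + 2) (by omega)) hlim]
  norm_num

theorem integral_Ioi_pow_div_one_add_pow (n m : ℕ) :
    ∫ t in Ioi (0:ℝ), t ^ n / (1 + t) ^ (n + m + 2) = n ! * m ! / (n + m + 1)! := by
  induction n generalizing m with
  | zero =>
    simp only [pow_zero, zero_add, integral_Ioi_one_div_one_add_pow, Nat.factorial_zero,
      Nat.factorial_succ]
    push_cast
    field_simp
  | succ n ih =>
    have hsplit : EqOn (fun t : ℝ => t ^ (n + 1) / (1 + t) ^ (n + 1 + m + 2))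
        (fun t => t ^ n / (1 + t) ^ (n + m + 2) - t ^ n / (1 + t) ^ (n + (m + 1) + 2))
        (Ioi 0) := by
      intro t (ht : 0 < t)
      rw [show n + (m + 1) + 2 = n + m + 2 + 1 by ring, show n + 1 + m + 2 = n + m + 2 + 1 by ring]
      field_simp
      ring
    rw [setIntegral_congr_fun measurableSet_Ioi hsplit,
      integral_sub (integrableOn_pow_div_one_add_pow (by omega))
        (integrableOn_pow_div_one_add_pow (by omega)), ih, ih,
      show n + (m + 1) + 1 = n + m + 1 + 1 by ring, show n + 1 + m + 1 = n + m + 1 + 1 by ring]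
    simp only [Nat.factorial_succ]
    push_cast
    field_simp
    ring

/-- Rotating by the angle `π / (b - a)` multiplies the integrand by `-1`. -/
theorem integral_conj_pow_mul_pow_div_radial_eq_zero {a b : ℕ} (hab : a ≠ b) (g : ℝ → ℂ) :
    ∫ w : ℂ, conj w ^ a * w ^ b / g ‖w‖ = 0 := by
  have hd : ((b : ℝ) - a) ≠ 0 := sub_ne_zero.2 fun h => hab (Nat.cast_injective h.symm)
  set u : Circle := Circle.exp (Real.pi / (b - a))
  have hu : conj (u : ℂ) ^ a * (u : ℂ) ^ b = -1 := by
    rw [← Circle.coe_inv_eq_conj, ← Circle.coe_pow, ← Circle.coe_pow, ← Circle.coe_mul,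
      ← Circle.exp_neg, ← Circle.exp_nsmul, ← Circle.exp_nsmul, ← Circle.exp_add,
      Circle.coe_exp]
    have hangle : a • -(Real.pi / (b - a)) + b • (Real.pi / (b - a)) = Real.pi := by
      rw [nsmul_eq_mul, nsmul_eq_mul]
      field_simp
      ring
    rw [hangle, exp_pi_mul_I]
  have hrot : ∀ w : ℂ,
      conj (u * w) ^ a * (u * w) ^ b / g ‖u * w‖ = -(conj w ^ a * w ^ b / g ‖w‖) := by
    intro w
    rw [map_mul, mul_pow, mul_pow, norm_mul, Circle.norm_coe, one_mul]
    linear_combination (conj w ^ a * w ^ b / g ‖w‖) * hu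
  have h := (rotation u).measurePreserving.integral_comp
    (rotation u).toHomeomorph.measurableEmbedding fun w => conj w ^ a * w ^ b / g ‖w‖
  simp only [rotation_apply, hrot, integral_neg] at h
  linear_combination -h / 2

theorem integral_conj_pow_mul_pow_div_one_add_norm_sq_pow (a m : ℕ) :
    ∫ w : ℂ, conj w ^ a * w ^ a / ((1 + ‖w‖ ^ 2 : ℝ) : ℂ) ^ (a + m + 2) =
      Real.pi * a ! * m ! / (a + m + 1)! := by
  have hradial : ∀ w : ℂ, conj w ^ a * w ^ a / ((1 + ‖w‖ ^ 2 : ℝ) : ℂ) ^ (a + m + 2) =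
      (((‖w‖ ^ 2) ^ a / (1 + ‖w‖ ^ 2) ^ (a + m + 2) : ℝ) : ℂ) := by
    intro w
    push_cast
    rw [← mul_pow, mul_comm, mul_conj']
  have hsubst : ∫ t in Ioi (0:ℝ), t ^ a / (1 + t) ^ (a + m + 2) =
      2 * ∫ r in Ioi (0:ℝ), r * ((r ^ 2) ^ a / (1 + r ^ 2) ^ (a + m + 2)) := by
    rw [← integral_comp_rpow_Ioi _ two_ne_zero, ← integral_const_mul]
    refine setIntegral_congr_fun measurableSet_Ioi fun r _ => ?_
    norm_num [Real.rpow_two]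
    ring
  simp_rw [hradial]
  rw [integral_fun_norm_addHaar volume
      (fun r => (((r ^ 2) ^ a / (1 + r ^ 2) ^ (a + m + 2) : ℝ) : ℂ)),
    Complex.finrank_real_complex, measureReal_def, Complex.volume_ball]
  simp only [Nat.add_one_sub_one, pow_one, Complex.real_smul, ← Complex.ofReal_mul]
  rw [integral_complex_ofReal, ← mul_div_cancel_left₀ (∫ r in Ioi (0:ℝ), _) two_ne_zero,
    ← hsubst, integral_Ioi_pow_div_one_add_pow]
  simp only [ENNReal.ofReal_one, one_pow, one_mul, ENNReal.coe_toReal, NNReal.coe_real_pi,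
    ofReal_div, ofReal_mul, ofReal_natCast, ofReal_ofNat, nsmul_eq_mul, Nat.cast_ofNat]
  ring

theorem integrable_conj_pow_mul_pow_div_one_add_norm_sq_pow {a b c : ℕ}
    (h : a + b + 3 ≤ 2 * c) :
    Integrable fun w : ℂ => conj w ^ a * w ^ b / ((1 + ‖w‖ ^ 2 : ℝ) : ℂ) ^ c := by
  have hmeas : Continuous fun w : ℂ => conj w ^ a * w ^ b / ((1 + ‖w‖ ^ 2 : ℝ) : ℂ) ^ c :=
    by fun_prop (disch := intro w; exact pow_ne_zero _ (ofReal_ne_zero.2 (by positivity)))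
  refine ((integrable_one_add_norm (E := ℂ) (r := 3) (by norm_num)).const_mul (2 ^ c)).mono'
    hmeas.aestronglyMeasurable (Filter.Eventually.of_forall fun w => ?_)
  have hr : 0 ≤ ‖w‖ := norm_nonneg w
  rw [norm_div, norm_mul, norm_pow, norm_pow, norm_pow, RCLike.norm_conj, norm_real,
    Real.norm_of_nonneg (by positivity), ← pow_add, Real.rpow_neg (by positivity),
    show (3 : ℝ) = (3 : ℕ) by norm_num, Real.rpow_natCast, div_le_iff₀ (by positivity),
    mul_assoc, inv_mul_eq_div, mul_div_assoc', le_div_iff₀ (by positivity)]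
  calc ‖w‖ ^ (a + b) * (1 + ‖w‖) ^ 3 ≤ (1 + ‖w‖) ^ (a + b) * (1 + ‖w‖) ^ 3 := by
        gcongr; linarith
    _ = (1 + ‖w‖) ^ (a + b + 3) := (pow_add _ _ _).symm
    _ ≤ ((1 + ‖w‖) ^ 2) ^ c := by rw [← pow_mul]; exact pow_le_pow_right₀ (by linarith) h
    _ ≤ (2 * (1 + ‖w‖ ^ 2)) ^ c := by gcongr; nlinarith [sq_nonneg (1 - ‖w‖)]
    _ = 2 ^ c * (1 + ‖w‖ ^ 2) ^ c := mul_pow _ _ _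

theorem integral_eval_mul_conj_mul_pow_div_one_add_norm_sq_pow (p : ℂ[X]) (z : ℂ) {b c : ℕ}
    (h : p.natDegree + b + 3 ≤ 2 * c) :
    ∫ w : ℂ, p.eval (z * conj w) * w ^ b / ((1 + ‖w‖ ^ 2 : ℝ) : ℂ) ^ c =
      p.coeff b * z ^ b *
        ∫ w : ℂ, conj w ^ b * w ^ b / ((1 + ‖w‖ ^ 2 : ℝ) : ℂ) ^ c := by
  have hexpand : ∀ w : ℂ, p.eval (z * conj w) * w ^ b / ((1 + ‖w‖ ^ 2 : ℝ) : ℂ) ^ c =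
      ∑ a ∈ Finset.range (p.natDegree + 1),
        p.coeff a * z ^ a * (conj w ^ a * w ^ b / ((1 + ‖w‖ ^ 2 : ℝ) : ℂ) ^ c) := by
    intro w
    rw [eval_eq_sum_range, Finset.sum_mul, Finset.sum_div]
    refine Finset.sum_congr rfl fun a _ => ?_
    ring
  simp_rw [hexpand]
  rw [integral_finsetSum _ fun a ha => (integrable_conj_pow_mul_pow_div_one_add_norm_sq_pow
    (by have := Finset.mem_range.1 ha; omega)).const_mul _]
  simp_rw [integral_const_mul]
  refine Finset.sum_eq_single b (fun a _ hab => ?_) (fun hb => ?_)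
  · rw [integral_conj_pow_mul_pow_div_radial_eq_zero hab
      fun r => ((1 + r ^ 2 : ℝ) : ℂ) ^ c, mul_zero]
  · rw [coeff_eq_zero_of_natDegree_lt (by simpa using hb), zero_mul, zero_mul]

theorem coeff_one_add_X_pow_mul_X_sub_one {R : Type*} [CommRing R] (n ℓ : ℕ) :
    ((n : R) + 1) * ((1 + X : R[X]) ^ n * (X - 1)).coeff ℓ =
      (2 * ℓ - (n + 1)) * (n + 1).choose ℓ := by
  rw [mul_sub, mul_one, coeff_sub]
  cases ℓ with
  | zero => simp [coeff_one_add_X_pow]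
  | succ s =>
    rw [coeff_mul_X, coeff_one_add_X_pow, coeff_one_add_X_pow]
    have hpascal := congrArg (Nat.cast : ℕ → R) (Nat.choose_succ_succ' n s)
    have habsorb := congrArg (Nat.cast : ℕ → R) (Nat.add_one_mul_choose_eq n s)
    push_cast at hpascal habsorb ⊢
    linear_combination (2 : R) * habsorb + (n + 1 : R) * hpascal

/-- `T_k^{cov}(x₃) e_ℓ = ((2ℓ-k)/k) e_ℓ` (Section 8 of the paper), written out
explicitly as an integral identity for the covariant Berezin–Toeplitz operator of the
height function `x₃` on `S² ≅ ℂP¹`. -/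
theorem stmt_5 (k : ℕ) (hk : 1 ≤ k) (ℓ : ℕ) (hℓ : ℓ ≤ k) (z : ℂ) :
    ((k : ℂ) + 1) / (Real.pi : ℂ) *
        ∫ w : ℂ, (1 + z * starRingEnd ℂ w) ^ (k - 1) * (z * starRingEnd ℂ w - 1) /
            ((1 + ‖w‖ ^ 2 : ℝ) : ℂ) ^ (k + 2) * w ^ ℓ =
      (2 * (ℓ : ℂ) - (k : ℂ)) / (k : ℂ) * z ^ ℓ := by
  obtain ⟨n, rfl⟩ : ∃ n, k = n + 1 := ⟨k - 1, by omega⟩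
  have hcoeff := coeff_one_add_X_pow_mul_X_sub_one (R := ℂ) n ℓ
  have hdeg : ((1 + X : ℂ[X]) ^ n * (X - 1)).natDegree ≤ n + 1 := by compute_degree
  set P : ℂ[X] := (1 + X) ^ n * (X - 1)
  have hintegrand : ∀ w : ℂ, (1 + z * conj w) ^ (n + 1 - 1) * (z * conj w - 1) /
      ((1 + ‖w‖ ^ 2 : ℝ) : ℂ) ^ (n + 1 + 2) * w ^ ℓ =
      P.eval (z * conj w) * w ^ ℓ / ((1 + ‖w‖ ^ 2 : ℝ) : ℂ) ^ (n + 1 + 2) := fun w => by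
    simp only [P, eval_mul, eval_pow, eval_add, eval_sub, eval_one, eval_X, Nat.add_sub_cancel]
    ring
  have hmoment := integral_conj_pow_mul_pow_div_one_add_norm_sq_pow ℓ (n + 1 - ℓ)
  rw [show ℓ + (n + 1 - ℓ) + 2 = n + 1 + 2 by omega,
    show ℓ + (n + 1 - ℓ) + 1 = n + 1 + 1 by omega, Nat.factorial_succ (n + 1)] at hmoment
  have hbinom := congrArg (Nat.cast : ℕ → ℂ) (Nat.choose_mul_factorial_mul_factorial hℓ)
  simp_rw [hintegrand]
  rw [integral_eval_mul_conj_mul_pow_div_one_add_norm_sq_pow P z (by omega), hmoment]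
  have hn2 : (n : ℂ) + 1 + 1 ≠ 0 := by norm_cast
  have hfac : ((n + 1)! : ℂ) ≠ 0 := Nat.cast_ne_zero.2 (Nat.factorial_ne_zero _)
  push_cast at hbinom ⊢
  field_simp
  linear_combination
    z ^ ℓ * ℓ ! * (n + 1 - ℓ)! * hcoeff + z ^ ℓ * (2 * ℓ - (n + 1)) * hbinom
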